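/- Let Λ ⊆ ℤ^d and ρ > 0 be such that Λ has upper density at least ρ, meaning: for every ε ∈ (0, ρ) and every R₀ ∈ ℕ there exist an integer R ≥ R₀ and x ∈ ℤ^d such that the discrete cube x + {0, 1, …, R−1}^d contains at least (ρ − ε)·R^d points of Λ. Let Ω ⊆ ℤ^d be a 0-symmetric set with Ω ∩ (Λ − Λ) ⊆ {0}. Then every positive definite function f : ℤ^d → ℂ with finite support contained in Ω satisfies Re(∑_{x ∈ ℤ^d} f(x)) ≤ (1/ρ) · f(0). -/

import Mathlib

open Complex
open scoped ComplexOrder Pointwise BigOperators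

/-- A function on an abelian group is positive definite. -/
def IsPosDefFn {G : Type*} [AddCommGroup G] (f : G → ℂ) : Prop :=
  ∀ (N : ℕ) (x : Fin N → G) (c : Fin N → ℂ),
    0 ≤ ∑ n : Fin N, ∑ m : Fin N, c n * (starRingEnd ℂ) (c m) * f (x n - x m)

/-!
Delsarte–Turán argument. Take a cube `Q₀` of side `R` containing a set `F ⊆ Λ` of density about
`ρ`, and its `L`-thickening `Q`, where `L` bounds the support of `f`. Positive definiteness of `f`
applied to the test vector `1_F - t • 1_Q` gives a quadratic inequality in `t`. Since the
differences of `F` avoid the support of `f` except at `0`, the `F × F` block contributes only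
`#F • f 0`; every `F`-row of the `F × Q` block sums to `∑ f`; and the `Q × Q` block is
`#Q₀ • ∑ f` up to an error carried by `Q \ Q₀`, negligible as `R → ∞`. Optimising in `t` gives
`∑ f ≤ f 0 / ρ` up to errors that vanish as `ε → 0` and `R → ∞`.
-/

open Finset Function Filter Topology

variable {G : Type*} [AddCommGroup G]

def diffSum (φ : G → ℝ) (A B : Finset G) : ℝ := ∑ x ∈ A, ∑ y ∈ B, φ (x - y)

namespace IsPosDefFn

variable {f : G → ℂ}

lemma re_map_zero_nonneg (hf : IsPosDefFn f) : 0 ≤ (f 0).re := by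
  simpa using (Complex.le_def.1 (hf 1 (fun _ => 0) (fun _ => 1))).1

lemma sum_fintype_nonneg (hf : IsPosDefFn f) {ι : Type*} [Fintype ι] (x : ι → G) (c : ι → ℂ) :
    0 ≤ ∑ i, ∑ j, c i * starRingEnd ℂ (c j) * f (x i - x j) := by
  let e := (Fintype.equivFin ι).symm
  rw [← e.sum_comp]
  simp_rw [← e.sum_comp (fun j => c _ * starRingEnd ℂ (c j) * f (x _ - x j))]
  exact hf _ (x ∘ e) (c ∘ e)

lemma diffSum_nonneg (hf : IsPosDefFn f) (F Q : Finset G) (t : ℝ) :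
    0 ≤ diffSum (fun z => (f z).re) F F
      - t * (diffSum (fun z => (f z).re) F Q + diffSum (fun z => (f z).re) Q F)
      + t ^ 2 * diffSum (fun z => (f z).re) Q Q := by
  have h := (Complex.le_def.1 <| hf.sum_fintype_nonneg (Sum.elim ((↑) : F → G) ((↑) : Q → G))
    (Sum.elim 1 fun _ => -(t : ℂ))).1
  simp only [Fintype.sum_sum_type, Sum.elim_inl, Sum.elim_inr, Pi.one_apply, map_one, map_neg,
    conj_ofReal, Complex.add_re, Complex.re_sum, Complex.zero_re, one_mul, mul_one, neg_mul,
    mul_neg, Complex.neg_re, Complex.re_ofReal_mul, ← ofReal_mul, sum_add_distrib,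
    sum_neg_distrib, ← mul_sum] at h
  simp only [diffSum, ← sum_coe_sort F, ← sum_coe_sort Q]
  linarith

end IsPosDefFn

section Translates

variable {α β : Type*} {φ : β → ℝ} {S : Finset β}

lemma sum_comp_equiv_eq_of_support_subset (e : α ≃ β) (hS : support φ ⊆ S) {Q : Finset α}
    (hQ : ∀ z ∈ S, e.symm z ∈ Q) : ∑ y ∈ Q, φ (e y) = ∑ z ∈ S, φ z := by
  refine (sum_map Q e.toEmbedding φ).symm.trans
    (sum_subset (fun z hz => mem_map_equiv.2 (hQ z hz))
      fun z _ hz => notMem_support.1 fun h => hz (hS h)).symm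

lemma sum_comp_equiv_le_of_support_subset [DecidableEq β] (e : α ≃ β) (hS : support φ ⊆ S)
    (Q : Finset α) : ∑ y ∈ Q, φ (e y) ≤ ∑ z ∈ S, |φ z| :=
  calc ∑ y ∈ Q, φ (e y) = ∑ z ∈ Q.map e.toEmbedding ∩ S, φ z :=
        (sum_map Q e.toEmbedding φ).symm.trans <| (sum_subset inter_subset_left
          fun _ hz hzS => notMem_support.1 fun h => hzS (mem_inter.2 ⟨hz, hS h⟩)).symm
    _ ≤ ∑ z ∈ Q.map e.toEmbedding ∩ S, |φ z| := sum_le_sum fun _ _ => le_abs_self _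
    _ ≤ ∑ z ∈ S, |φ z| :=
        sum_le_sum_of_subset_of_nonneg inter_subset_right fun _ _ _ => abs_nonneg _

end Translates

section diffSum

variable {φ : G → ℝ} {S : Finset G}

lemma diffSum_self_of_separated {F : Finset G} (hF : ∀ x ∈ F, ∀ y ∈ F, φ (x - y) ≠ 0 → x = y) :
    diffSum φ F F = #F * φ 0 := by
  rw [diffSum, ← nsmul_eq_mul, ← sum_const, sum_congr rfl fun x hx => ?_]
  rw [sum_eq_single_of_mem x hx fun y hy hne => by_contra fun h => hne (hF x hx y hy h).symm,
    sub_self]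

lemma diffSum_eq_card_mul_left (hS : support φ ⊆ S) {A B : Finset G}
    (hAB : ∀ x ∈ A, ∀ z ∈ S, x - z ∈ B) : diffSum φ A B = #A * ∑ z ∈ S, φ z := by
  rw [diffSum, ← nsmul_eq_mul, ← sum_const]
  exact sum_congr rfl fun x hx =>
    sum_comp_equiv_eq_of_support_subset (Equiv.subLeft x) hS fun z hz => by
      simpa [sub_eq_neg_add] using hAB x hx z hz

lemma diffSum_eq_card_mul_right (hS : support φ ⊆ S) {A B : Finset G}
    (hAB : ∀ y ∈ B, ∀ z ∈ S, y + z ∈ A) : diffSum φ A B = #B * ∑ z ∈ S, φ z := by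
  rw [diffSum, sum_comm, ← nsmul_eq_mul, ← sum_const]
  exact sum_congr rfl fun y hy =>
    sum_comp_equiv_eq_of_support_subset (Equiv.subRight y) hS fun z hz => by
      simpa [add_comm] using hAB y hy z hz

lemma diffSum_self_le [DecidableEq G] (hS : support φ ⊆ S) {Q₀ Q : Finset G} (hQ₀Q : Q₀ ⊆ Q)
    (hQ : ∀ x ∈ Q₀, ∀ z ∈ S, x - z ∈ Q) :
    diffSum φ Q Q ≤ #Q₀ * ∑ z ∈ S, φ z + (#Q - #Q₀) * ∑ z ∈ S, |φ z| := by
  have hcore : ∑ x ∈ Q₀, ∑ y ∈ Q, φ (x - y) = #Q₀ * ∑ z ∈ S, φ z :=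
    diffSum_eq_card_mul_left hS hQ
  have hrim : ∑ x ∈ Q \ Q₀, ∑ y ∈ Q, φ (x - y) ≤ #(Q \ Q₀) * ∑ z ∈ S, |φ z| := by
    simpa only [nsmul_eq_mul, Equiv.subLeft_apply] using sum_le_card_nsmul _ _ _ fun x _ =>
      sum_comp_equiv_le_of_support_subset (Equiv.subLeft x) hS Q
  rw [diffSum, ← sum_sdiff hQ₀Q, hcore, card_sdiff_of_subset hQ₀Q,
    Nat.cast_sub (card_le_card hQ₀Q)] at *
  linarith

end diffSum

theorem IsPosDefFn.sum_re_le_of_separated {f : G → ℂ} (hf : IsPosDefFn f) {S F Q₀ Q : Finset G}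
    (hS : support f ⊆ S) (hF : ∀ x ∈ F, ∀ y ∈ F, f (x - y) ≠ 0 → x = y) (hF₀ : F.Nonempty)
    (hFQ₀ : F ⊆ Q₀) (hQ₀Q : Q₀ ⊆ Q) (hQ : ∀ x ∈ Q₀, ∀ z ∈ S, x + z ∈ Q ∧ x - z ∈ Q) :
    ∑ z ∈ S, (f z).re ≤ #Q₀ / #F * (f 0).re + (#Q - #Q₀) / #Q₀ * ∑ z ∈ S, |(f z).re| := by
  classical
  set g : G → ℝ := fun z => (f z).re
  have hg : support g ⊆ S := (support_comp_subset Complex.zero_re f).trans hS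
  have hFF : diffSum g F F = #F * g 0 :=
    diffSum_self_of_separated fun x hx y hy h => hF x hx y hy fun h' => h (by simp [g, h'])
  have hFQ : diffSum g F Q = #F * ∑ z ∈ S, g z :=
    diffSum_eq_card_mul_left hg fun x hx z hz => (hQ x (hFQ₀ hx) z hz).2
  have hQF : diffSum g Q F = #F * ∑ z ∈ S, g z :=
    diffSum_eq_card_mul_right hg fun y hy z hz => (hQ y (hFQ₀ hy) z hz).1
  have hQQ := diffSum_self_le hg hQ₀Q fun x hx z hz => (hQ x hx z hz).2
  -- `t = #F / #Q₀` minimises the quadratic in `t`.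
  have hpd := hf.diffSum_nonneg F Q (#F / #Q₀)
  rw [hFF, hFQ, hQF] at hpd
  have hN : (0 : ℝ) < #F := by exact_mod_cast hF₀.card_pos
  have hV : (0 : ℝ) < #Q₀ := by exact_mod_cast (hF₀.mono hFQ₀).card_pos
  generalize (#F : ℝ) = N at *
  generalize (#Q₀ : ℝ) = V at *
  generalize ∑ z ∈ S, g z = T at *
  have hQQ' := mul_le_mul_of_nonneg_left hQQ (sq_nonneg (N / V))
  have key : V / N * g 0 + (#Q - V) / V * ∑ z ∈ S, |g z| - T
      = V / N ^ 2 * (N * g 0 - N / V * (N * T + N * T)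
        + (N / V) ^ 2 * (V * T + (#Q - V) * ∑ z ∈ S, |g z|)) := by
    field_simp
    ring
  rw [← sub_nonneg, key]
  exact mul_nonneg (by positivity) (by linarith)

section Cube

variable {ι : Type*} [Fintype ι] [DecidableEq ι]

noncomputable def cube (x : ι → ℤ) (R : ℕ) : Finset (ι → ℤ) :=
  Fintype.piFinset fun i => Finset.Ico (x i) (x i + R)

lemma mem_cube {x y : ι → ℤ} {R : ℕ} : y ∈ cube x R ↔ ∀ i, x i ≤ y i ∧ y i < x i + R := by
  simp [cube]

lemma coe_cube (x : ι → ℤ) (R : ℕ) :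
    (cube x R : Set (ι → ℤ)) = Set.univ.pi fun i => Set.Ico (x i) (x i + R) := by
  simp [cube]

lemma card_cube (x : ι → ℤ) (R : ℕ) : #(cube x R) = R ^ Fintype.card ι := by
  simp [cube]

lemma add_mem_cube_sub {x y z : ι → ℤ} {R L : ℕ} (hy : y ∈ cube x R) (hz : ∀ i, |z i| ≤ L) :
    y + z ∈ cube (x - (L : ι → ℤ)) (R + 2 * L) := by
  rw [mem_cube] at hy ⊢
  intro i
  have := abs_le.1 (hz i)
  simp only [Pi.add_apply, Pi.sub_apply, Pi.natCast_apply]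
  push_cast
  constructor <;> linarith [hy i]

end Cube

theorem IsPosDefFn.sum_re_le_of_separated_cube {ι : Type*} [Fintype ι] [DecidableEq ι]
    {f : (ι → ℤ) → ℂ} (hf : IsPosDefFn f) {S : Finset (ι → ℤ)} (hS : support f ⊆ S) {L : ℕ}
    (hL : ∀ z ∈ S, ∀ i, |z i| ≤ L) {F : Finset (ι → ℤ)}
    (hF : ∀ x ∈ F, ∀ y ∈ F, f (x - y) ≠ 0 → x = y) {x : ι → ℤ} {R : ℕ} (hR : 0 < R)
    (hFx : F ⊆ cube x R) {δ : ℝ} (hδ : 0 < δ) (hcard : δ * R ^ Fintype.card ι ≤ #F) :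
    ∑ z ∈ S, (f z).re ≤ (f 0).re / δ
      + (((R : ℝ) + 2 * L) ^ Fintype.card ι - R ^ Fintype.card ι) / R ^ Fintype.card ι
        * ∑ z ∈ S, |(f z).re| := by
  have hN : (0 : ℝ) < #F := lt_of_lt_of_le (by positivity) hcard
  have h := hf.sum_re_le_of_separated hS hF (card_pos.1 (by exact_mod_cast hN)) hFx
    (Q := cube (x - (L : ι → ℤ)) (R + 2 * L))
    (fun y hy => by simpa using add_mem_cube_sub hy (z := 0) (by simp))
    fun y hy z hz => ⟨add_mem_cube_sub hy (hL z hz),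
      by simpa [sub_eq_add_neg] using add_mem_cube_sub hy (z := -z) (by simpa using hL z hz)⟩
  rw [card_cube, card_cube] at h
  push_cast at h
  refine h.trans (add_le_add_left ?_ _)
  rw [div_mul_eq_mul_div, div_le_div_iff₀ hN hδ]
  nlinarith [hf.re_map_zero_nonneg]

lemma tendsto_add_pow_sub_pow_div_pow (c : ℝ) (n : ℕ) :
    Tendsto (fun R : ℕ => (((R : ℝ) + c) ^ n - R ^ n) / R ^ n) atTop (𝓝 0) := by
  have h : Tendsto (fun R : ℕ => (1 + c / R) ^ n - 1) atTop (𝓝 0) := by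
    simpa using (((tendsto_const_div_atTop_nhds_zero_nat c).const_add 1).pow n).sub_const 1
  refine h.congr' ((eventually_ne_atTop 0).mono fun R hR => ?_)
  have hR' : (R : ℝ) ≠ 0 := Nat.cast_ne_zero.2 hR
  rw [one_add_div hR', div_pow, div_sub_one (pow_ne_zero n hR')]

lemma le_div_of_forall_frequently_le_add {T a ρ : ℝ} {e : ℕ → ℝ} (hρ : 0 < ρ)
    (he : Tendsto e atTop (𝓝 0))
    (h : ∀ ε, 0 < ε → ε < ρ → ∃ᶠ R in atTop, T ≤ a / (ρ - ε) + e R) : T ≤ a / ρ := by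
  have hT : ∀ ε, 0 < ε → ε < ρ → T ≤ a / (ρ - ε) := fun ε hε hερ => by
    by_contra! hlt
    have hev := (by simpa using he.const_add (a / (ρ - ε)) :
      Tendsto (fun R => a / (ρ - ε) + e R) atTop (𝓝 (a / (ρ - ε)))).eventually_lt_const hlt
    obtain ⟨R, hle, hgt⟩ := ((h ε hε hερ).and_eventually hev).exists
    exact hgt.not_ge hle
  have hlim : Tendsto (fun ε => a / (ρ - ε)) (𝓝[>] 0) (𝓝 (a / ρ)) := by
    have : ContinuousAt (fun ε : ℝ => a / (ρ - ε)) 0 :=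
      continuousAt_const.div (by fun_prop) (by simpa using hρ.ne')
    simpa using this.tendsto.mono_left nhdsWithin_le_nhds
  exact ge_of_tendsto hlim <| by
    filter_upwards [Ioo_mem_nhdsGT hρ] with ε hε using hT ε hε.1 hε.2

lemma exists_forall_abs_apply_le {ι : Type*} [Fintype ι] (S : Finset (ι → ℤ)) :
    ∃ L : ℕ, ∀ z ∈ S, ∀ i, |z i| ≤ L := by
  refine ⟨∑ z ∈ S, ∑ i, (z i).natAbs, fun z hz i => ?_⟩
  rw [Int.abs_eq_natAbs, Nat.cast_le]
  exact (single_le_sum (fun _ _ => Nat.zero_le _) (mem_univ i)).trans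
    (single_le_sum (f := fun z : ι → ℤ => ∑ i, (z i).natAbs) (fun _ _ => Nat.zero_le _) hz)

theorem turan_bound_from_packing_Zd_general
    {d : ℕ} (Λ : Set (Fin d → ℤ)) (ρ : ℝ) (hρ : 0 < ρ)
    (hdens : ∀ ε : ℝ, 0 < ε → ε < ρ → ∀ R₀ : ℕ,
      ∃ R : ℕ, R₀ ≤ R ∧ ∃ x : Fin d → ℤ, ∃ F : Finset (Fin d → ℤ),
        (F : Set (Fin d → ℤ)) ⊆ Λ ∩ Set.univ.pi (fun i => Set.Ico (x i) (x i + (R : ℤ))) ∧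
        (ρ - ε) * (R : ℝ) ^ d ≤ (F.card : ℝ))
    (Ω : Set (Fin d → ℤ))
    (hΛΩ : Ω ∩ (Λ - Λ) ⊆ {0})
    (f : (Fin d → ℤ) → ℂ) (hf_pd : IsPosDefFn f)
    (hf_fin : (Function.support f).Finite) (hf_supp : Function.support f ⊆ Ω) :
    (∑ᶠ x, f x).re ≤ (1 / ρ) * (f 0).re := by
  classical
  rw [finsum_eq_sum f hf_fin, Complex.re_sum, one_div_mul_eq_div]
  set S := hf_fin.toFinset
  have hS : support f ⊆ S := by simp [S]
  obtain ⟨L, hL⟩ := exists_forall_abs_apply_le S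
  have herr := (tendsto_add_pow_sub_pow_div_pow (2 * L) d).mul_const (∑ z ∈ S, |(f z).re|)
  rw [zero_mul] at herr
  refine le_div_of_forall_frequently_le_add hρ herr fun ε hε hερ => ?_
  refine ((frequently_atTop.2 (hdens ε hε hερ)).and_eventually (eventually_gt_atTop 0)).mono ?_
  rintro R ⟨⟨x, F, hFΛ, hcard⟩, hR⟩
  have hsep : ∀ x ∈ F, ∀ y ∈ F, f (x - y) ≠ 0 → x = y := fun x hx y hy h =>
    sub_eq_zero.1 (hΛΩ ⟨hf_supp h, Set.sub_mem_sub (hFΛ hx).1 (hFΛ hy).1⟩)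
  have hFx : F ⊆ cube x R := by
    rw [← coe_subset, coe_cube]
    exact hFΛ.trans Set.inter_subset_right
  simpa using hf_pd.sum_re_le_of_separated_cube hS hL hsep hR hFx (sub_pos.2 hερ)
    (by simpa using hcard)

theorem turan_bound_from_packing_Zd
    {d : ℕ} (Λ : Set (Fin d → ℤ)) (ρ : ℝ) (hρ : 0 < ρ)
    (hdens : ∀ ε : ℝ, 0 < ε → ε < ρ → ∀ R₀ : ℕ,
      ∃ R : ℕ, R₀ ≤ R ∧ ∃ x : Fin d → ℤ, ∃ F : Finset (Fin d → ℤ),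
        (F : Set (Fin d → ℤ)) ⊆ Λ ∩ Set.univ.pi (fun i => Set.Ico (x i) (x i + (R : ℤ))) ∧
        (ρ - ε) * (R : ℝ) ^ d ≤ (F.card : ℝ))
    (Ω : Set (Fin d → ℤ)) (hΩsym : Ω = -Ω)
    (hΛΩ : Ω ∩ (Λ - Λ) ⊆ {0})
    (f : (Fin d → ℤ) → ℂ) (hf_pd : IsPosDefFn f)
    (hf_fin : (Function.support f).Finite) (hf_supp : Function.support f ⊆ Ω) :
    (∑ᶠ x, f x).re ≤ (1 / ρ) * (f 0).re :=
  turan_bound_from_packing_Zd_general Λ ρ hρ hdens Ω hΛΩ f hf_pd hf_fin hf_supp
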